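/- arXiv:math/0603176 — 2 statements merged into one kernel-verified Lean document; each statement's English description precedes it below -/
import Mathlib

section
/- Let r : [0,T] → ℝ³ be continuously differentiable with r(t) ≠ 0 for all t. If r'(t) - ((r(t)/|r(t)|) ⬝ r'(t)) (r(t)/|r(t)|) = 0 for all t in [0,T], then there exists a fixed unit vector r∞ and a scalar function λ : [0,T] → ℝ such that r(t) = λ(t) r∞ for all t in [0,T]; explicitly, r(t) = |r(0)| exp(∫₀ᵗ ξ(σ) dσ) · (r(0)/|r(0)|) where ξ(t) = (r(t) ⬝ r'(t))/|r(t)|². -/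
/-! A vanishing transverse component means `r' = ξ • r` with `ξ = ⟪r, r'⟫ / ‖r‖ ^ 2`, a scalar
linear ODE. With the integrating factor, `exp (-∫₀ᵗ ξ) • r t` has zero right derivative and is
therefore constant, so `r t = exp (∫₀ᵗ ξ) • r 0` stays on the ray through `r 0`. -/

open scoped RealInnerProductSpace
open Set

theorem inner_normalize_smul_normalize {E : Type*} [NormedAddCommGroup E] [InnerProductSpace ℝ E]
    (x v : E) : ⟪‖x‖⁻¹ • x, v⟫ • (‖x‖⁻¹ • x) = (⟪x, v⟫ / ‖x‖ ^ 2) • x := by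
  rw [real_inner_smul_left, smul_smul, div_eq_mul_inv, sq, mul_inv]
  ring_nf

theorem hasDerivWithinAt_integral_Ici {ξ : ℝ → ℝ} {a b x : ℝ} (hξ : ContinuousOn ξ (Icc a b))
    (hx : x ∈ Ico a b) : HasDerivWithinAt (fun t => ∫ σ in a..t, ξ σ) (ξ x) (Ici x) x := by
  have hmem : Icc a b ∈ nhdsWithin x (Ioi x) := Icc_mem_nhdsGT_of_mem hx
  refine intervalIntegral.integral_hasDerivWithinAt_right ?_
    ⟨Icc a b, hmem, hξ.aestronglyMeasurable measurableSet_Icc⟩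
    ((hξ x (Ico_subset_Icc_self hx)).mono_of_mem_nhdsWithin hmem)
  exact (hξ.mono (by rw [uIcc_of_le hx.1]; exact Icc_subset_Icc_right hx.2.le)).intervalIntegrable

theorem eq_exp_integral_smul_of_hasDerivWithinAt {E : Type*} [NormedAddCommGroup E]
    [NormedSpace ℝ E] {f : ℝ → E} {ξ : ℝ → ℝ} {a b : ℝ} (hf : ContinuousOn f (Icc a b))
    (hξ : ContinuousOn ξ (Icc a b))
    (hderiv : ∀ x ∈ Ico a b, HasDerivWithinAt f (ξ x • f x) (Ici x) x) :
    ∀ t ∈ Icc a b, f t = Real.exp (∫ σ in a..t, ξ σ) • f a := by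
  set F : ℝ → ℝ := fun t => ∫ σ in a..t, ξ σ
  have hF : ContinuousOn F (Icc a b) := by
    rcases le_or_gt a b with hab | hab
    · have := intervalIntegral.continuousOn_primitive_interval (μ := MeasureTheory.volume)
        (a := a) (b := b) (by rw [uIcc_of_le hab]; exact hξ.integrableOn_Icc)
      rwa [uIcc_of_le hab] at this
    · simp [Icc_eq_empty_of_lt hab]
  have hconst : ∀ t ∈ Icc a b, Real.exp (-F t) • f t = Real.exp (-F a) • f a := by
    refine constant_of_has_deriv_right_zero (hF.neg.rexp.smul hf) fun x hx => ?_
    refine (((hasDerivWithinAt_integral_Ici hξ hx).neg.exp).smul (hderiv x hx)).congr_deriv ?_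
    rw [smul_smul, ← add_smul, mul_neg, add_neg_cancel, zero_smul]
  intro t ht
  have h := congrArg (Real.exp (F t) • ·) (hconst t ht)
  simpa [F, smul_smul, ← Real.exp_add] using h

theorem stmt_1 (T : ℝ) (hT : 0 ≤ T) (r : ℝ → EuclideanSpace ℝ (Fin 3))
    (hdiff : Differentiable ℝ r)
    (hcont : ContinuousOn (deriv r) (Set.Icc (0:ℝ) T))
    (hne : ∀ t ∈ Set.Icc (0:ℝ) T, r t ≠ 0)
    (hw : ∀ t ∈ Set.Icc (0:ℝ) T,
      deriv r t - ⟪(‖r t‖⁻¹ • r t), deriv r t⟫ • (‖r t‖⁻¹ • r t) = 0) :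
    ∃ (rinf : EuclideanSpace ℝ (Fin 3)) (lam : ℝ → ℝ), ‖rinf‖ = 1 ∧
      (∀ t ∈ Set.Icc (0:ℝ) T, r t = lam t • rinf) ∧
      rinf = ‖r 0‖⁻¹ • r 0 ∧
      (∀ t ∈ Set.Icc (0:ℝ) T,
        lam t = ‖r 0‖ * Real.exp (∫ σ in (0:ℝ)..t, ⟪r σ, deriv r σ⟫ / ‖r σ‖ ^ 2)) := by
  set ξ : ℝ → ℝ := fun σ => ⟪r σ, deriv r σ⟫ / ‖r σ‖ ^ 2
  have hξ : ContinuousOn ξ (Icc 0 T) :=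
    (hdiff.continuous.continuousOn.inner hcont).div (hdiff.continuous.norm.pow 2).continuousOn
      fun t ht => pow_ne_zero 2 (norm_ne_zero_iff.mpr (hne t ht))
  have hode : ∀ x ∈ Ico 0 T, HasDerivWithinAt r (ξ x • r x) (Ici x) x := fun x hx => by
    rw [← inner_normalize_smul_normalize, ← sub_eq_zero.mp (hw x (Ico_subset_Icc_self hx))]
    exact (hdiff x).hasDerivAt.hasDerivWithinAt
  have hr : ∀ t ∈ Icc 0 T, r t = Real.exp (∫ σ in (0:ℝ)..t, ξ σ) • r 0 :=
    eq_exp_integral_smul_of_hasDerivWithinAt hdiff.continuous.continuousOn hξ hode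
  have hr0 : ‖r 0‖ ≠ 0 := norm_ne_zero_iff.mpr (hne 0 ⟨le_rfl, hT⟩)
  refine ⟨‖r 0‖⁻¹ • r 0, fun t => ‖r 0‖ * Real.exp (∫ σ in (0:ℝ)..t, ξ σ), ?_, fun t ht => ?_,
    rfl, fun t _ => rfl⟩
  · rw [norm_smul, norm_inv, norm_norm, inv_mul_cancel₀ hr0]
  · rw [hr t ht, smul_smul]
    field_simp
end

section
/- Let Γ : [0,T] → ℝ be differentiable with -1 < Γ(t) < 1 for all t, and suppose Γ'(t) ≤ -c₂ (1 - Γ(t)²) for some constant c₂ > 0. Then Γ(t) ≤ tanh(artanh(Γ(0)) - c₂ t) for all t ∈ [0,T]. -/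
/-! Since `artanh' x = 1 / (1 - x²)`, the hypothesis says `(artanh ∘ Γ)' ≤ -c₂`, so
`artanh (Γ t) ≤ artanh (Γ 0) - c₂ t`; applying the increasing map `tanh` gives the bound. -/

noncomputable def artanh (x : ℝ) : ℝ := (1 / 2) * Real.log ((1 + x) / (1 - x))

open Set

lemma artanh_eq_real_artanh {x : ℝ} (hx : x ∈ Ioo (-1) 1) : artanh x = Real.artanh x :=
  (Real.artanh_eq_half_log (Ioo_subset_Icc_self hx)).symm

lemma hasDerivAt_artanh {x : ℝ} (hx : x ∈ Ioo (-1) 1) :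
    HasDerivAt artanh (1 / (1 - x ^ 2)) x := by
  obtain ⟨hx₁, hx₂⟩ := hx
  have hquot : HasDerivAt (fun y : ℝ => (1 + y) / (1 - y))
      ((1 * (1 - x) - (1 + x) * -1) / (1 - x) ^ 2) x :=
    ((hasDerivAt_id x).const_add 1).div (by simpa using (hasDerivAt_id x).const_sub 1)
      (by linarith)
  refine ((hquot.log (div_pos (by linarith) (by linarith)).ne').const_mul (1 / 2)).congr_deriv ?_
  have h₁ : 1 + x ≠ 0 := by linarith
  have h₂ : 1 - x ≠ 0 := by linarith
  have h₃ : 1 - x ^ 2 ≠ 0 := by nlinarith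
  field_simp
  ring

lemma le_tanh_of_artanh_le {x y : ℝ} (hx : x ∈ Ioo (-1) 1) (h : artanh x ≤ y) :
    x ≤ Real.tanh y := by
  rwa [← Real.artanh_le_artanh_iff hx ⟨Real.neg_one_lt_tanh y, Real.tanh_lt_one y⟩,
    Real.artanh_tanh, ← artanh_eq_real_artanh hx]

lemma antitoneOn_artanh_comp_add_mul {a b c : ℝ} {Γ : ℝ → ℝ}
    (hdiff : ∀ t ∈ Icc a b, DifferentiableAt ℝ Γ t)
    (hbound : ∀ t ∈ Icc a b, Γ t ∈ Ioo (-1) 1)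
    (hineq : ∀ t ∈ Icc a b, deriv Γ t ≤ -c * (1 - Γ t ^ 2)) :
    AntitoneOn (fun t => artanh (Γ t) + c * t) (Icc a b) := by
  have hderiv : ∀ t ∈ Icc a b,
      HasDerivAt (fun t => artanh (Γ t) + c * t) (1 / (1 - Γ t ^ 2) * deriv Γ t + c) t :=
    fun t ht => ((hasDerivAt_artanh (hbound t ht)).comp t (hdiff t ht).hasDerivAt).add
      (by simpa using (hasDerivAt_id t).const_mul c)
  refine antitoneOn_of_hasDerivWithinAt_nonpos (convex_Icc a b)
    (fun t ht => (hderiv t ht).continuousAt.continuousWithinAt)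
    (fun t ht => (hderiv t (interior_subset ht)).hasDerivWithinAt) fun t ht => ?_
  have ht := interior_subset ht
  obtain ⟨hΓ₁, hΓ₂⟩ := hbound t ht
  have hpos : 0 < 1 - Γ t ^ 2 := by nlinarith
  rw [one_div_mul_eq_div, div_add' _ _ _ hpos.ne', div_nonpos_iff]
  exact Or.inr ⟨by linarith [hineq t ht], hpos.le⟩

theorem stmt_15_general (T : ℝ) (Γ : ℝ → ℝ) (c₂ : ℝ)
    (hdiff : ∀ t ∈ Set.Icc (0:ℝ) T, DifferentiableAt ℝ Γ t)
    (hbound : ∀ t ∈ Set.Icc (0:ℝ) T, -1 < Γ t ∧ Γ t < 1)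
    (hineq : ∀ t ∈ Set.Icc (0:ℝ) T, deriv Γ t ≤ -c₂ * (1 - (Γ t) ^ 2)) :
    ∀ t ∈ Set.Icc (0:ℝ) T, Γ t ≤ Real.tanh (artanh (Γ 0) - c₂ * t) := by
  intro t ht
  have h₀ : (0 : ℝ) ∈ Icc 0 T := ⟨le_rfl, ht.1.trans ht.2⟩
  have hle := antitoneOn_artanh_comp_add_mul hdiff hbound hineq h₀ ht ht.1
  exact le_tanh_of_artanh_le (hbound t ht) (by simp only [mul_zero, add_zero] at hle; linarith)

theorem stmt_15 (T : ℝ) (hT : 0 ≤ T) (Γ : ℝ → ℝ) (c₂ : ℝ) (hc₂ : 0 < c₂)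
    (hdiff : ∀ t ∈ Set.Icc (0:ℝ) T, DifferentiableAt ℝ Γ t)
    (hbound : ∀ t ∈ Set.Icc (0:ℝ) T, -1 < Γ t ∧ Γ t < 1)
    (hineq : ∀ t ∈ Set.Icc (0:ℝ) T, deriv Γ t ≤ -c₂ * (1 - (Γ t) ^ 2)) :
    ∀ t ∈ Set.Icc (0:ℝ) T, Γ t ≤ Real.tanh (artanh (Γ 0) - c₂ * t) :=
  stmt_15_general T Γ c₂ hdiff hbound hineq
end
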